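/- arXiv:2312.14956 — 8 statements merged into one kernel-verified Lean document; each statement's English description precedes it below -/
import Mathlib

section
/- Let σ̃ : [0, L] → ℝ be twice differentiable and λ, δ, μ ∈ ℝ. If σ̃ satisfies the Euler–Lagrange equation -2σ̃'' - sin(2σ̃) - λ sin σ̃ + δ cos σ̃ = 0 together with the first integral -σ̃'² + (1/2)cos(2σ̃) + λ cos σ̃ + δ sin σ̃ + μ = 0, then the function Q̃ = e^{iσ̃} satisfies the algebraic differential equation Q̃'² + (1/4)Q̃⁴ + ((λ - iδ)/2)Q̃³ + μ Q̃² + ((λ + iδ)/2)Q̃ + 1/4 = 0. -/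
/-- A solution of the Euler–Lagrange equation with its first integral gives the algebraic
differential equation for `Q̃ = e^{iσ̃}`. -/
theorem stmt2 (L lam δ μ : ℝ) (hL : 0 < L) (σ σ' σ'' : ℝ → ℝ)
    (hd1 : ∀ s ∈ Set.Icc (0:ℝ) L, HasDerivAt σ (σ' s) s)
    (hd2 : ∀ s ∈ Set.Icc (0:ℝ) L, HasDerivAt σ' (σ'' s) s)
    (hEL : ∀ s ∈ Set.Icc (0:ℝ) L,
      -2 * σ'' s - Real.sin (2 * σ s) - lam * Real.sin (σ s) + δ * Real.cos (σ s) = 0)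
    (hFI : ∀ s ∈ Set.Icc (0:ℝ) L,
      -(σ' s) ^ 2 + (1/2) * Real.cos (2 * σ s) + lam * Real.cos (σ s)
        + δ * Real.sin (σ s) + μ = 0) :
    ∀ s ∈ Set.Icc (0:ℝ) L,
      (Complex.I * σ' s * Complex.exp (Complex.I * σ s)) ^ 2
        + (1/4) * (Complex.exp (Complex.I * σ s)) ^ 4
        + ((lam - Complex.I * δ) / 2) * (Complex.exp (Complex.I * σ s)) ^ 3
        + μ * (Complex.exp (Complex.I * σ s)) ^ 2
        + ((lam + Complex.I * δ) / 2) * Complex.exp (Complex.I * σ s)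
        + 1/4 = 0 := by
  intro s hs
  have h := hFI s hs
  set E := Complex.exp (Complex.I * σ s) with hEdef
  set F := Complex.exp (-(Complex.I * σ s)) with hFdef
  have hEF : E * F = 1 := by
    rw [hEdef, hFdef, ← Complex.exp_add]; simp
  have hcosC : Complex.cos (σ s : ℂ) = (E + F) / 2 := by
    rw [Complex.cos, hEdef, hFdef]
    rw [show ((σ s : ℂ) * Complex.I) = Complex.I * σ s by ring,
        show (-((σ s : ℂ)) * Complex.I) = -(Complex.I * σ s) by ring]
  have hsinC : Complex.sin (σ s : ℂ) = (F - E) * Complex.I / 2 := by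
    rw [Complex.sin, hEdef, hFdef]
    rw [show ((σ s : ℂ) * Complex.I) = Complex.I * σ s by ring,
        show (-((σ s : ℂ)) * Complex.I) = -(Complex.I * σ s) by ring]
  have hE2 : Complex.exp (2 * (σ s : ℂ) * Complex.I) = E ^ 2 := by
    rw [show (2 * (σ s : ℂ) * Complex.I) = Complex.I * σ s + Complex.I * σ s by ring,
        Complex.exp_add, hEdef]
    ring
  have hF2 : Complex.exp (-(2 * (σ s : ℂ)) * Complex.I) = F ^ 2 := by
    rw [show (-(2 * (σ s : ℂ)) * Complex.I) = -(Complex.I * σ s) + -(Complex.I * σ s) by ring,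
        Complex.exp_add, hFdef]
    ring
  have hcos2C : Complex.cos (2 * (σ s : ℂ)) = (E ^ 2 + F ^ 2) / 2 := by
    rw [Complex.cos, hE2, hF2]
  have hC : -(σ' s : ℂ) ^ 2 + (1/2) * ((E ^ 2 + F ^ 2) / 2) + lam * ((E + F) / 2)
      + δ * ((F - E) * Complex.I / 2) + μ = 0 := by
    have := congrArg (fun x : ℝ => (x : ℂ)) h
    push_cast at this
    rw [hcos2C, hcosC, hsinC] at this
    simpa using this
  have hI : Complex.I ^ 2 = -1 := Complex.I_sq
  linear_combination (E ^ 2) * hC +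
    (-(E * F + 1) / 4 - ((lam + Complex.I * δ) / 2) * E) * hEF +
    ((σ' s : ℂ) ^ 2 * E ^ 2) * hI
end

section
/- For q ∈ (0,1), the theta constant θ₄(ω) = G·∏_{n=1}^∞ (1 - 2q^{2n-1} cos 2ω + q^{4n-2}) with G = ∏_{n=1}^∞ (1 - q^{2n}) is strictly positive and strictly monotonically increasing as a function of ω on the interval (0, π/2). In particular θ₄'(ω) ≠ 0 for ω ∈ (0, π/2). -/
/-!
Each factor `1 - 2 a cos 2ω + a²` with `a = q^(2n+1) ∈ (0,1)` is at least `(1 - q)²` and differs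
from `1` by at most `3a`, which is summable. So the product is `exp` of a convergent series of
logarithms, which may be differentiated termwise: the logarithmic derivative of `θ₄` is
`∑ 4 a sin 2ω / (1 - 2 a cos 2ω + a²)`, a series of positive terms on `(0, π/2)`. Hence
`θ₄' = θ₄ · (log θ₄)' > 0` there.
-/

open Real Set

section InfiniteProduct

variable {ι : Type*}

theorem tprod_pos_of_summable_log {f : ι → ℝ} (hf : ∀ i, 0 < f i)
    (hlog : Summable fun i => log (f i)) : 0 < ∏' i, f i := by
  rw [← rexp_tsum_eq_tprod hf hlog]
  exact exp_pos _

theorem hasDerivAt_tprod_of_summable_log {f f' : ι → ℝ → ℝ} {u : ι → ℝ} (hu : Summable u)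
    (hf : ∀ i y, HasDerivAt (f i) (f' i y) y) (hpos : ∀ i y, 0 < f i y)
    (hbound : ∀ i y, ‖f' i y / f i y‖ ≤ u i) (hlog : ∀ y, Summable fun i => log (f i y))
    (x : ℝ) :
    HasDerivAt (fun y => ∏' i, f i y) ((∏' i, f i x) * ∑' i, f' i x / f i x) x := by
  have hexp : (fun y => ∏' i, f i y) = fun y => exp (∑' i, log (f i y)) :=
    funext fun y => (rexp_tsum_eq_tprod (hpos · y) (hlog y)).symm
  rw [hexp, ← rexp_tsum_eq_tprod (hpos · x) (hlog x)]
  exact (hasDerivAt_tsum hu (fun i y => (hf i y).log (hpos i y).ne') hbound (hlog x) x).exp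

end InfiniteProduct

theorem summable_pow_comp_injective {q : ℝ} (hq0 : 0 ≤ q) (hq1 : q < 1) {e : ℕ → ℕ}
    (he : Function.Injective e) : Summable fun n => q ^ e n :=
  (summable_geometric_of_lt_one hq0 hq1).comp_injective he

theorem tprod_one_sub_pow_pos {q : ℝ} (hq0 : 0 ≤ q) (hq1 : q < 1) {e : ℕ → ℕ}
    (he : Function.Injective e) (he0 : ∀ n, e n ≠ 0) : 0 < ∏' n, (1 - q ^ e n) := by
  refine tprod_pos_of_summable_log (fun n => sub_pos.2 (pow_lt_one₀ hq0 hq1 (he0 n))) ?_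
  simpa [sub_eq_add_neg] using
    summable_log_one_add_of_summable (summable_pow_comp_injective hq0 hq1 he).neg

noncomputable def theta4Factor (a ω : ℝ) : ℝ := 1 - 2 * a * cos (2 * ω) + a ^ 2

section Theta4Factor

variable {a : ℝ} (ω : ℝ)

theorem sq_one_sub_le_theta4Factor (ha : 0 ≤ a) : (1 - a) ^ 2 ≤ theta4Factor a ω := by
  unfold theta4Factor
  nlinarith [cos_le_one (2 * ω)]

theorem theta4Factor_pos (ha0 : 0 ≤ a) (ha1 : a < 1) : 0 < theta4Factor a ω :=
  (pow_pos (sub_pos.2 ha1) 2).trans_le (sq_one_sub_le_theta4Factor ω ha0)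

theorem abs_theta4Factor_sub_one_le (ha0 : 0 ≤ a) (ha1 : a ≤ 1) :
    |theta4Factor a ω - 1| ≤ 3 * a := by
  have hcos := abs_le.1 (abs_cos_le_one (2 * ω))
  unfold theta4Factor
  rw [abs_le]
  constructor <;> nlinarith

theorem hasDerivAt_theta4Factor (a : ℝ) :
    HasDerivAt (theta4Factor a) (4 * a * sin (2 * ω)) ω := by
  have hcos : HasDerivAt (fun t => cos (2 * t)) (-sin (2 * ω) * 2) ω := by
    simpa using ((hasDerivAt_id ω).const_mul 2).cos
  exact (((hcos.const_mul (2 * a)).const_sub 1).add_const (a ^ 2)).congr_deriv (by ring)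

theorem norm_logDeriv_theta4Factor_le {q : ℝ} (ha0 : 0 ≤ a) (haq : a ≤ q) (hq1 : q < 1) :
    ‖4 * a * sin (2 * ω) / theta4Factor a ω‖ ≤ 4 * a / (1 - q) ^ 2 := by
  have hsq : (1 - q) ^ 2 ≤ theta4Factor a ω :=
    (pow_le_pow_left₀ (by linarith) (by linarith) 2).trans (sq_one_sub_le_theta4Factor ω ha0)
  rw [norm_div, norm_of_nonneg (theta4Factor_pos ω ha0 (haq.trans_lt hq1)).le]
  refine div_le_div₀ (by positivity) ?_ (by nlinarith) hsq
  rw [norm_mul, norm_of_nonneg (by positivity : (0 : ℝ) ≤ 4 * a)]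
  exact mul_le_of_le_one_right (by positivity) (abs_sin_le_one _)

end Theta4Factor

noncomputable def theta4Prod (q ω : ℝ) : ℝ := ∏' n : ℕ, theta4Factor (q ^ (2 * n + 1)) ω

section Theta4Prod

variable {q : ℝ} (hq0 : 0 < q) (hq1 : q < 1)
include hq0 hq1

theorem summable_odd_pow : Summable fun n : ℕ => q ^ (2 * n + 1) :=
  summable_pow_comp_injective hq0.le hq1 fun m n h => by omega

theorem theta4Factor_odd_pow_pos (n : ℕ) (ω : ℝ) : 0 < theta4Factor (q ^ (2 * n + 1)) ω :=
  theta4Factor_pos ω (pow_nonneg hq0.le _) (pow_lt_one₀ hq0.le hq1 (by omega))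

theorem norm_logDeriv_theta4Factor_odd_pow_le (n : ℕ) (ω : ℝ) :
    ‖4 * q ^ (2 * n + 1) * sin (2 * ω) / theta4Factor (q ^ (2 * n + 1)) ω‖ ≤
      4 * q ^ (2 * n + 1) / (1 - q) ^ 2 :=
  norm_logDeriv_theta4Factor_le ω (pow_nonneg hq0.le _)
    (pow_le_of_le_one hq0.le hq1.le (by omega)) hq1

theorem summable_log_theta4Factor (ω : ℝ) :
    Summable fun n : ℕ => log (theta4Factor (q ^ (2 * n + 1)) ω) := by
  have hsub : Summable fun n : ℕ => theta4Factor (q ^ (2 * n + 1)) ω - 1 :=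
    ((summable_odd_pow hq0 hq1).mul_left 3).of_norm_bounded fun n =>
      abs_theta4Factor_sub_one_le ω (pow_nonneg hq0.le _) (pow_le_one₀ hq0.le hq1.le)
  simpa using summable_log_one_add_of_summable hsub

theorem theta4Prod_pos (ω : ℝ) : 0 < theta4Prod q ω :=
  tprod_pos_of_summable_log (theta4Factor_odd_pow_pos hq0 hq1 · ω)
    (summable_log_theta4Factor hq0 hq1 ω)

theorem hasDerivAt_theta4Prod (ω : ℝ) :
    HasDerivAt (theta4Prod q)
      (theta4Prod q ω * ∑' n : ℕ, 4 * q ^ (2 * n + 1) * sin (2 * ω) /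
        theta4Factor (q ^ (2 * n + 1)) ω) ω :=
  hasDerivAt_tprod_of_summable_log
    (((summable_odd_pow hq0 hq1).mul_left 4).div_const ((1 - q) ^ 2))
    (fun _ y => hasDerivAt_theta4Factor y _) (theta4Factor_odd_pow_pos hq0 hq1)
    (norm_logDeriv_theta4Factor_odd_pow_le hq0 hq1) (summable_log_theta4Factor hq0 hq1) ω

theorem tsum_logDeriv_theta4Factor_pos {ω : ℝ} (hω : ω ∈ Ioo 0 (π / 2)) :
    0 < ∑' n : ℕ, 4 * q ^ (2 * n + 1) * sin (2 * ω) / theta4Factor (q ^ (2 * n + 1)) ω := by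
  have hsin : 0 < sin (2 * ω) := sin_pos_of_pos_of_lt_pi (by linarith [hω.1]) (by linarith [hω.2])
  have hterm (n : ℕ) :
      0 < 4 * q ^ (2 * n + 1) * sin (2 * ω) / theta4Factor (q ^ (2 * n + 1)) ω :=
    div_pos (by positivity) (theta4Factor_odd_pow_pos hq0 hq1 n ω)
  have hsum := (((summable_odd_pow hq0 hq1).mul_left 4).div_const ((1 - q) ^ 2)).of_norm_bounded
    (norm_logDeriv_theta4Factor_odd_pow_le hq0 hq1 · ω)
  exact hsum.tsum_pos (fun n => (hterm n).le) 0 (hterm 0)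

end Theta4Prod

/-- For real nome `q ∈ (0,1)` (rectangular lattice), the Jacobi theta function `θ₄`,
given by its infinite product, is positive and strictly increasing on `(0, π/2)`;
in particular `θ₄'(ω) ≠ 0` there. -/
theorem stmt4 (q : ℝ) (hq : q ∈ Set.Ioo (0:ℝ) 1) :
    let G : ℝ := ∏' n : ℕ, (1 - q ^ (2 * (n + 1)))
    let θ₄ : ℝ → ℝ := fun ω =>
      G * ∏' n : ℕ, (1 - 2 * q ^ (2 * (n + 1) - 1) * Real.cos (2 * ω) + q ^ (4 * (n + 1) - 2))
    (∀ ω ∈ Set.Ioo 0 (Real.pi / 2), 0 < θ₄ ω) ∧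
    StrictMonoOn θ₄ (Set.Ioo 0 (Real.pi / 2)) ∧
    ∀ ω ∈ Set.Ioo 0 (Real.pi / 2), deriv θ₄ ω ≠ 0 := by
  obtain ⟨hq0, hq1⟩ := hq
  intro G θ₄
  have hθ : θ₄ = fun ω => G * theta4Prod q ω := by
    funext ω
    simp only [θ₄, theta4Prod, theta4Factor]
    congr! 3 with n
    rw [← pow_mul, show 2 * (n + 1) - 1 = 2 * n + 1 by omega,
      show 4 * (n + 1) - 2 = (2 * n + 1) * 2 by omega]
  have hG : 0 < G := tprod_one_sub_pow_pos hq0.le hq1 (fun m n h => by omega) (fun n => by omega)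
  have hderiv (ω : ℝ) := hθ ▸ (hasDerivAt_theta4Prod hq0 hq1 ω).const_mul G
  have hderiv_pos (ω : ℝ) (hω : ω ∈ Ioo 0 (π / 2)) := mul_pos hG
    (mul_pos (theta4Prod_pos hq0 hq1 ω) (tsum_logDeriv_theta4Factor_pos hq0 hq1 hω))
  refine ⟨fun ω _ => hθ ▸ mul_pos hG (theta4Prod_pos hq0 hq1 ω), ?_,
    fun ω hω => (hderiv ω).deriv ▸ (hderiv_pos ω hω).ne'⟩
  refine strictMonoOn_of_hasDerivWithinAt_pos (convex_Ioo _ _)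
    (fun x _ => (hderiv x).continuousAt.continuousWithinAt)
    (fun x _ => (hderiv x).hasDerivWithinAt)
    fun x hx => hderiv_pos x (by rwa [interior_Ioo] at hx)
end

section
/- Define φ(p) = Σ_{n=1}^∞ (-1)^{n+1} pⁿ/(1 + (-1)ⁿ pⁿ)² for p ∈ (0,1). Then φ is continuous, φ(0⁺) = 0, φ(1/2) > 1/8, and φ is strictly monotonically increasing on (0, 1/2). Consequently there exists a unique p₀ ∈ (0, 1/2) with φ(p₀) = 1/8. -/
/-!
With `ψ(x) = x / (1 + x)²` the `n`-th term of `φ(p)` is `-ψ((-p)ⁿ⁺¹)`, so `φ(p) = -S(-p)` for the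
Lambert-type series `S(z) = ∑ ψ(zⁿ⁺¹)`. Its termwise derivative `(n + 1) zⁿ ψ'(zⁿ⁺¹)` is bounded by
a multiple of `(n + 1) rⁿ` on `|z| < r < 1`, so `S` is differentiable on `(-1, 1)` and `φ` is
continuous there with `φ(0) = 0`. Both `φ` and `φ'` are then handled by grouping consecutive terms:
`ψ(x) ≤ x` gives pairs of `φ` at least `p²ᵏ⁺¹(1 - p) ≥ 0`, so `φ(1/2)` is at least the sum of its first
two terms, `2 - 4/25`; and `ψ' ≥ 1` on `(-1, 0]`, `ψ' ≤ 1` on `[0, ∞)` give pairs of `φ'` at least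
`p²ᵏ((2k + 1) - (2k + 2)p) > 0` for `p < 1/2`. The intermediate value theorem on `[0, 1/2]` and
strict monotonicity give the unique root.
-/

open Filter Set Metric Topology

theorem add_le_tsum_of_pairs_nonneg {a : ℕ → ℝ} (ha : Summable a)
    (hpair : ∀ k, 0 ≤ a (2 * k) + a (2 * k + 1)) : a 0 + a 1 ≤ ∑' n, a n := by
  have he : Summable fun k => a (2 * k) :=
    ha.comp_injective (mul_right_injective₀ two_ne_zero)
  have ho : Summable fun k => a (2 * k + 1) :=
    ha.comp_injective ((add_left_injective 1).comp (mul_right_injective₀ two_ne_zero))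
  rw [← tsum_even_add_odd he ho, ← he.tsum_add ho]
  exact (he.add ho).le_tsum 0 fun k _ => hpair k

theorem abs_pow_succ_le {z : ℝ} (hz : |z| ≤ 1) (n : ℕ) : |z ^ (n + 1)| ≤ |z| := by
  rw [abs_pow]
  exact pow_le_of_le_one (abs_nonneg z) hz n.succ_ne_zero

theorem summable_succ_mul_geometric {r : ℝ} (hr0 : 0 ≤ r) (hr : r < 1) :
    Summable fun n : ℕ => ((n : ℝ) + 1) * r ^ n := by
  have hnorm : ‖r‖ < 1 := by rwa [Real.norm_eq_abs, abs_of_nonneg hr0]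
  simpa [add_mul] using
    (summable_pow_mul_geometric_of_norm_lt_one 1 hnorm).add (summable_geometric_of_lt_one hr0 hr)

namespace PhiSeries

noncomputable def psi (x : ℝ) : ℝ := x / (1 + x) ^ 2

noncomputable def dpsi (x : ℝ) : ℝ := (1 - x) / (1 + x) ^ 3

theorem hasDerivAt_psi {x : ℝ} (hx : 1 + x ≠ 0) : HasDerivAt psi (dpsi x) x := by
  have h := (hasDerivAt_id' x).div (((hasDerivAt_id' x).const_add 1).fun_pow 2) (pow_ne_zero 2 hx)
  refine h.congr_deriv ?_
  rw [dpsi]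
  field_simp
  ring

theorem psi_le_self {x : ℝ} (hx : -1 < x) : psi x ≤ x := by
  have h1 : 0 < 1 + x := by linarith
  rw [psi, div_le_iff₀ (by positivity)]
  nlinarith [mul_nonneg (mul_nonneg h1.le h1.le) (sq_nonneg x), sq_nonneg x]

theorem one_le_dpsi {x : ℝ} (hx1 : -1 < x) (hx0 : x ≤ 0) : 1 ≤ dpsi x := by
  have h1 : 0 < 1 + x := by linarith
  rw [dpsi, le_div_iff₀ (by positivity), one_mul]
  nlinarith [pow_le_one₀ h1.le (by linarith : 1 + x ≤ 1) (n := 2)]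

theorem dpsi_le_one {x : ℝ} (hx : 0 ≤ x) : dpsi x ≤ 1 := by
  rw [dpsi, div_le_iff₀ (by positivity), one_mul]
  nlinarith [one_le_pow₀ (by linarith : 1 ≤ 1 + x) (n := 3)]

theorem abs_dpsi_le {x r : ℝ} (hr : r < 1) (hx : |x| ≤ r) : |dpsi x| ≤ 2 / (1 - r) ^ 3 := by
  obtain ⟨hlo, hhi⟩ := abs_le.1 hx
  have hden : 0 < 1 - r := by linarith
  rw [dpsi, abs_div, abs_pow, abs_of_pos (by linarith : 0 < 1 + x)]
  exact div_le_div₀ zero_le_two (abs_le.2 ⟨by linarith, by linarith⟩) (by positivity)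
    (pow_le_pow_left₀ hden.le (by linarith) 3)

theorem hasDerivAt_psi_pow {z : ℝ} (hz : |z| < 1) (n : ℕ) :
    HasDerivAt (fun z => psi (z ^ (n + 1))) ((n + 1) * z ^ n * dpsi (z ^ (n + 1))) z := by
  have hne : 1 + z ^ (n + 1) ≠ 0 := by
    have := abs_lt.1 ((abs_pow_succ_le hz.le n).trans_lt hz)
    linarith
  refine ((hasDerivAt_psi hne).comp (h := fun z => z ^ (n + 1)) z
    (hasDerivAt_pow (n + 1) z)).congr_deriv ?_
  push_cast
  ring

theorem norm_deriv_psi_pow_le {z r : ℝ} (hr : r < 1) (hz : |z| ≤ r) (n : ℕ) :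
    ‖(n + 1) * z ^ n * dpsi (z ^ (n + 1))‖ ≤ 2 / (1 - r) ^ 3 * ((n + 1) * r ^ n) := by
  have hr1 : |z| ≤ 1 := hz.trans hr.le
  have hr0 : 0 ≤ r := (abs_nonneg z).trans hz
  have hdpsi := abs_dpsi_le hr ((abs_pow_succ_le hr1 n).trans hz)
  have hpow : |z ^ n| ≤ r ^ n := by
    rw [abs_pow]; exact pow_le_pow_left₀ (abs_nonneg z) hz n
  rw [Real.norm_eq_abs, abs_mul, abs_mul, abs_of_nonneg (by positivity : (0 : ℝ) ≤ n + 1)]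
  calc (n + 1) * |z ^ n| * |dpsi (z ^ (n + 1))| ≤ (n + 1) * r ^ n * (2 / (1 - r) ^ 3) := by
        gcongr
    _ = 2 / (1 - r) ^ 3 * ((n + 1) * r ^ n) := by ring

noncomputable def lambertSum (z : ℝ) : ℝ := ∑' n : ℕ, psi (z ^ (n + 1))

noncomputable def lambertSumDeriv (z : ℝ) : ℝ := ∑' n : ℕ, (n + 1) * z ^ n * dpsi (z ^ (n + 1))

theorem summable_lambertSumDeriv {z : ℝ} (hz : |z| < 1) :
    Summable fun n : ℕ => (n + 1) * z ^ n * dpsi (z ^ (n + 1)) :=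
  ((summable_succ_mul_geometric (abs_nonneg z) hz).mul_left _).of_norm_bounded
    (norm_deriv_psi_pow_le hz le_rfl)

theorem summable_lambertSum_and_hasDerivAt {z : ℝ} (hz : |z| < 1) :
    (Summable fun n : ℕ => psi (z ^ (n + 1))) ∧ HasDerivAt lambertSum (lambertSumDeriv z) z := by
  obtain ⟨r, hzr, hr⟩ := exists_between hz
  have hr0 : 0 ≤ r := (abs_nonneg z).trans hzr.le
  have hderiv : ∀ (n : ℕ) (y : ℝ), y ∈ ball (0 : ℝ) r →
      HasDerivAt (fun z => psi (z ^ (n + 1))) ((n + 1) * y ^ n * dpsi (y ^ (n + 1))) y :=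
    fun n y hy => hasDerivAt_psi_pow ((mem_ball_zero_iff.1 hy).trans hr) n
  have hbound : ∀ (n : ℕ) (y : ℝ), y ∈ ball (0 : ℝ) r →
      ‖(n + 1) * y ^ n * dpsi (y ^ (n + 1))‖ ≤ 2 / (1 - r) ^ 3 * ((n + 1) * r ^ n) :=
    fun n y hy => norm_deriv_psi_pow_le hr (mem_ball_zero_iff.1 hy).le n
  have h0 : (0 : ℝ) ∈ ball (0 : ℝ) r := mem_ball_self ((abs_nonneg z).trans_lt hzr)
  have hsum0 : Summable fun n : ℕ => psi ((0 : ℝ) ^ (n + 1)) := by simp [psi]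
  have hz' : z ∈ ball (0 : ℝ) r := mem_ball_zero_iff.2 hzr
  have hconn := (convex_ball (0 : ℝ) r).isPreconnected
  have hu := (summable_succ_mul_geometric hr0 hr).mul_left (2 / (1 - r) ^ 3)
  have h1 := summable_of_summable_hasDerivAt_of_isPreconnected hu isOpen_ball hconn hderiv hbound h0
      hsum0 hz'
  have h2 := hasDerivAt_tsum_of_isPreconnected hu isOpen_ball hconn hderiv hbound h0 hsum0 hz'
  exact ⟨h1, h2⟩

theorem deriv_term_pair_pos {p : ℝ} (hp0 : 0 < p) (hp : p < 1 / 2) (k : ℕ) :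
    0 < ((2 * k : ℕ) + 1 : ℝ) * (-p) ^ (2 * k) * dpsi ((-p) ^ (2 * k + 1)) +
      ((2 * k + 1 : ℕ) + 1 : ℝ) * (-p) ^ (2 * k + 1) * dpsi ((-p) ^ (2 * k + 1 + 1)) := by
  rw [(even_two_mul k).neg_pow, (odd_two_mul_add_one k).neg_pow,
    (odd_two_mul_add_one k).add_one.neg_pow]
  set A : ℝ := ((2 * k : ℕ) + 1 : ℝ) * p ^ (2 * k)
  set B : ℝ := ((2 * k + 1 : ℕ) + 1 : ℝ) * p ^ (2 * k + 1)
  have hq : p ^ (2 * k + 1) < 1 := pow_lt_one₀ hp0.le (by linarith) (by omega)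
  have hA : A ≤ A * dpsi (-p ^ (2 * k + 1)) :=
    le_mul_of_one_le_right (by positivity)
      (one_le_dpsi (by linarith) (by linarith [pow_pos hp0 (2 * k + 1)]))
  have hB : B * dpsi (p ^ (2 * k + 1 + 1)) ≤ B :=
    mul_le_of_le_one_right (by positivity) (dpsi_le_one (by positivity))
  have hBA : B < A := by
    have hk : ((2 * k + 1 : ℕ) + 1 : ℝ) * p < (2 * k : ℕ) + 1 := by push_cast; nlinarith
    simpa only [A, B, pow_succ, ← mul_assoc, mul_right_comm _ (p ^ (2 * k))] using
      mul_lt_mul_of_pos_right hk (pow_pos hp0 (2 * k))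
  have hsplit : A * dpsi (-p ^ (2 * k + 1)) - B * dpsi (p ^ (2 * k + 1 + 1)) =
      ((2 * k : ℕ) + 1 : ℝ) * p ^ (2 * k) * dpsi (-p ^ (2 * k + 1)) +
        ((2 * k + 1 : ℕ) + 1 : ℝ) * -p ^ (2 * k + 1) * dpsi (p ^ (2 * k + 1 + 1)) := by
    ring
  linarith

theorem lambertSumDeriv_neg_pos {p : ℝ} (hp0 : 0 < p) (hp : p < 1 / 2) :
    0 < lambertSumDeriv (-p) := by
  have hsum := summable_lambertSumDeriv (z := -p) (by rw [abs_neg, abs_of_pos hp0]; linarith)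
  have h0 := deriv_term_pair_pos hp0 hp 0
  simp only [mul_zero, zero_add] at h0
  exact h0.trans_le (add_le_tsum_of_pairs_nonneg hsum fun k => (deriv_term_pair_pos hp0 hp k).le)

noncomputable def phi (p : ℝ) : ℝ := -lambertSum (-p)

theorem tsum_eq_phi (p : ℝ) :
    ∑' n : ℕ, (-1 : ℝ) ^ n * p ^ (n + 1) / (1 + (-1 : ℝ) ^ (n + 1) * p ^ (n + 1)) ^ 2 = phi p := by
  rw [phi, lambertSum, ← tsum_neg]
  refine tsum_congr fun n => ?_
  rw [psi, neg_pow p (n + 1), pow_succ (-1 : ℝ) n]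
  ring

theorem hasDerivAt_phi {p : ℝ} (hp : |p| < 1) : HasDerivAt phi (lambertSumDeriv (-p)) p := by
  have h := (summable_lambertSum_and_hasDerivAt (z := -p) (by rwa [abs_neg])).2
  exact ((h.comp p (hasDerivAt_neg p)).neg).congr_deriv (by ring)

theorem phi_zero : phi 0 = 0 := by simp [phi, lambertSum, psi]

theorem neg_psi_neg_sub_psi_sq_le_phi {p : ℝ} (hp0 : 0 ≤ p) (hp1 : p < 1) :
    -psi (-p) - psi (p ^ 2) ≤ phi p := by
  have hp : |-p| < 1 := by rwa [abs_neg, abs_of_nonneg hp0]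
  have hterm : ∀ n : ℕ, -(-p) ^ (n + 1) ≤ -psi ((-p) ^ (n + 1)) := fun n =>
    neg_le_neg (psi_le_self (abs_lt.1 ((abs_pow_succ_le hp.le n).trans_lt hp)).1)
  have hpair : ∀ k : ℕ, 0 ≤ -psi ((-p) ^ (2 * k + 1)) + -psi ((-p) ^ (2 * k + 1 + 1)) := by
    intro k
    have hdiff : 0 ≤ -(-p) ^ (2 * k + 1) + -(-p) ^ (2 * k + 1 + 1) := by
      rw [(odd_two_mul_add_one k).neg_pow, (odd_two_mul_add_one k).add_one.neg_pow,
        neg_neg, pow_succ p (2 * k + 1)]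
      nlinarith [mul_le_mul_of_nonneg_left hp1.le (pow_nonneg hp0 (2 * k + 1))]
    linarith [hterm (2 * k), hterm (2 * k + 1)]
  have h := add_le_tsum_of_pairs_nonneg (summable_lambertSum_and_hasDerivAt hp).1.neg hpair
  rw [phi, lambertSum, ← tsum_neg]
  simpa [sub_eq_add_neg] using h

theorem one_eighth_lt_phi_half : 1 / 8 < phi (1 / 2) := by
  refine lt_of_lt_of_le ?_ (neg_psi_neg_sub_psi_sq_le_phi (by norm_num) (by norm_num))
  norm_num [psi]

theorem strictMonoOn_phi : StrictMonoOn phi (Ioo 0 (1 / 2)) := by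
  have hp : ∀ {p : ℝ}, p ∈ Ioo (0 : ℝ) (1 / 2) → |p| < 1 := fun hp => by
    rw [abs_of_pos hp.1]; linarith [hp.2]
  refine strictMonoOn_of_deriv_pos (convex_Ioo 0 (1 / 2))
    (fun p hp' => (hasDerivAt_phi (hp hp')).continuousAt.continuousWithinAt) fun p hp' => ?_
  rw [interior_Ioo] at hp'
  rw [(hasDerivAt_phi (hp hp')).deriv]
  exact lambertSumDeriv_neg_pos hp'.1 hp'.2

end PhiSeries

open PhiSeries

/-- The function `φ(p) = Σ_{n≥1} (-1)^{n+1} pⁿ/(1+(-1)ⁿ pⁿ)²` is continuous on `(0,1)`,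
tends to `0` at `0⁺`, satisfies `φ(1/2) > 1/8`, is strictly increasing on `(0,1/2)`,
and hence takes the value `1/8` at a unique `p₀ ∈ (0,1/2)`. -/
theorem stmt6 :
    let φ : ℝ → ℝ := fun p =>
      ∑' n : ℕ, (-1 : ℝ) ^ n * p ^ (n + 1) / (1 + (-1 : ℝ) ^ (n + 1) * p ^ (n + 1)) ^ 2
    ContinuousOn φ (Set.Ioo 0 1) ∧
    Filter.Tendsto φ (nhdsWithin 0 (Set.Ioo 0 1)) (nhds 0) ∧
    φ (1/2) > 1/8 ∧
    StrictMonoOn φ (Set.Ioo 0 (1/2)) ∧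
    ∃! p₀ : ℝ, p₀ ∈ Set.Ioo (0:ℝ) (1/2) ∧ φ p₀ = 1/8 := by
  intro φ
  have hφ : φ = phi := funext tsum_eq_phi
  rw [hφ]
  have hcont : ContinuousOn phi (Ioo (-1) 1) := fun p hp =>
    (hasDerivAt_phi (abs_lt.2 hp)).continuousAt.continuousWithinAt
  have htendsto : Tendsto phi (𝓝 0) (𝓝 0) := by
    simpa [phi_zero] using (hasDerivAt_phi (p := 0) (by simp)).continuousAt.tendsto
  refine ⟨hcont.mono (Ioo_subset_Ioo_left (by norm_num)), htendsto.mono_left nhdsWithin_le_nhds,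
    one_eighth_lt_phi_half, strictMonoOn_phi, ?_⟩
  obtain ⟨p₀, hp₀, hφp₀⟩ := intermediate_value_Ioo (by norm_num : (0 : ℝ) ≤ 1 / 2)
    (hcont.mono (Icc_subset_Ioo (by norm_num) (by norm_num)))
    ⟨by rw [phi_zero]; norm_num, one_eighth_lt_phi_half⟩
  exact ⟨p₀, ⟨hp₀, hφp₀⟩, fun q hq => strictMonoOn_phi.injOn hq.1 hp₀ (hq.2.trans hφp₀.symm)⟩
end

section
/- Let h : ℝ² → ℝ (variables u, w) satisfy the Riccati equation h_u = U(u)e^h + U₁(u)e^{-h} and the harmonic equation h_{uu} + h_{ww} = 0, where U, U₁ are smooth functions of u only and h depends nontrivially on w. Then the coefficients satisfy U₁''/U₁ = U''/U = U₂ - 2UU₁ and (U₂ + 6UU₁)' = 0 for a function U₂(u) characterized by h_w² = -U₁(u)²e^{-2h} + 2U₁'(u)e^{-h} - U₂(u) - 2U'(u)e^h - U(u)²e^{2h}. In particular, U and U₁ are solutions of the same integer Lamé-type equation y'' = (C₁ - 8UU₁)y with C₁ = U₂ + 6UU₁ constant. -/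
open Real


/-- Compatibility of the Riccati and harmonic equations for the metric factor `h` forces
the coefficients `U`, `U₁` to satisfy a Lamé-type equation with `C₁ = U₂ + 6UU₁` constant. -/
theorem stmt9 (h : ℝ → ℝ → ℝ) (U U₁ U₂ : ℝ → ℝ)
    (hsm : ContDiff ℝ (⊤ : ℕ∞) (Function.uncurry h))
    (hUsm : ContDiff ℝ (⊤ : ℕ∞) U) (hU1sm : ContDiff ℝ (⊤ : ℕ∞) U₁) (hU2sm : ContDiff ℝ (⊤ : ℕ∞) U₂)
    (hRic : ∀ u w, deriv (fun t => h t w) u = U u * Real.exp (h u w) + U₁ u * Real.exp (-(h u w)))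
    (hHarm : ∀ u w, deriv (deriv (fun t => h t w)) u + deriv (deriv (fun t => h u t)) w = 0)
    (hU2 : ∀ u w, (deriv (fun t => h u t) w) ^ 2 =
      -(U₁ u) ^ 2 * Real.exp (-(2 * h u w)) + 2 * deriv U₁ u * Real.exp (-(h u w))
        - U₂ u - 2 * deriv U u * Real.exp (h u w) - (U u) ^ 2 * Real.exp (2 * h u w))
    (hindep : ∀ (u A B C : ℝ),
      (∀ w, A * Real.exp (-(h u w)) + B + C * Real.exp (h u w) = 0) → A = 0 ∧ B = 0 ∧ C = 0) :
    (∀ u, deriv (deriv U) u = (U₂ u - 2 * U u * U₁ u) * U u) ∧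
    (∀ u, deriv (deriv U₁) u = (U₂ u - 2 * U u * U₁ u) * U₁ u) ∧
    (∀ u, deriv (fun t => U₂ t + 6 * U t * U₁ t) u = 0) ∧
    ∃ C₁ : ℝ, (∀ u, U₂ u + 6 * U u * U₁ u = C₁) ∧
      (∀ u, deriv (deriv U) u = (C₁ - 8 * U u * U₁ u) * U u) ∧
      (∀ u, deriv (deriv U₁) u = (C₁ - 8 * U u * U₁ u) * U₁ u) := by
  set H : ℝ × ℝ → ℝ := Function.uncurry h with hH
  set F : ℝ × ℝ → (ℝ × ℝ →L[ℝ] ℝ) := fderiv ℝ H with hF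
  -- differentiability facts
  have hdH : ∀ p : ℝ × ℝ, HasFDerivAt H (F p) p :=
    fun p => (hsm.differentiable (by simp) p).hasFDerivAt
  have hFsm : ContDiff ℝ (⊤ : ℕ∞) F := hsm.fderiv_right (by simp)
  have hFd : Differentiable ℝ F := hFsm.differentiable (by simp)
  have hdF : ∀ p : ℝ × ℝ, HasFDerivAt F (fderiv ℝ F p) p := fun p => (hFd p).hasFDerivAt
  -- curves
  have hcurve1 : ∀ (u w : ℝ), HasDerivAt (fun t : ℝ => (t, w)) ((1:ℝ), (0:ℝ)) u :=
    fun u w => (hasDerivAt_id u).prodMk (hasDerivAt_const u w)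
  have hcurve2 : ∀ (u w : ℝ), HasDerivAt (fun t : ℝ => (u, t)) ((0:ℝ), (1:ℝ)) w :=
    fun u w => (hasDerivAt_const w u).prodMk (hasDerivAt_id w)
  -- partial derivatives of h
  have hu_eq : ∀ u w, HasDerivAt (fun t => h t w) (F (u, w) (1, 0)) u := by
    intro u w
    exact (hdH (u, w)).comp_hasDerivAt u (hcurve1 u w)
  have hw_eq : ∀ u w, HasDerivAt (fun t => h u t) (F (u, w) (0, 1)) w := by
    intro u w
    exact (hdH (u, w)).comp_hasDerivAt w (hcurve2 u w)
  set g2 : ℝ → ℝ → ℝ := fun u w => F (u, w) (0, 1) with hg2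
  -- value of the u-partial
  have huval : ∀ u w, F (u, w) (1, 0) = U u * exp (h u w) + U₁ u * exp (-(h u w)) := by
    intro u w
    rw [← (hu_eq u w).deriv]
    exact hRic u w
  -- derivative of g2 in u, via symmetry of second derivative
  have hg2u : ∀ u w, HasDerivAt (fun t => g2 t w)
      ((U u * exp (h u w) - U₁ u * exp (-(h u w))) * g2 u w) u := by
    intro u w
    have h1 : HasDerivAt (fun t => g2 t w) (fderiv ℝ F (u, w) (1, 0) (0, 1)) u := by
      have hcomp : HasFDerivAt (fun p : ℝ × ℝ => F p (0, 1))
          ((ContinuousLinearMap.apply ℝ ℝ ((0:ℝ), (1:ℝ))).comp (fderiv ℝ F (u, w))) (u, w) :=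
        (ContinuousLinearMap.apply ℝ ℝ ((0:ℝ), (1:ℝ))).hasFDerivAt.comp (u, w) (hdF (u, w))
      exact hcomp.comp_hasDerivAt u (hcurve1 u w)
    have hsymm : fderiv ℝ F (u, w) (1, 0) (0, 1) = fderiv ℝ F (u, w) (0, 1) (1, 0) :=
      second_derivative_symmetric hdH (hdF (u, w)) _ _
    -- compute fderiv F (u,w) (0,1) (1,0) = ∂_w (F (u, ·) (1,0))
    have h2 : HasDerivAt (fun t => F (u, t) (1, 0)) (fderiv ℝ F (u, w) (0, 1) (1, 0)) w := by
      have hcomp : HasFDerivAt (fun p : ℝ × ℝ => F p (1, 0))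
          ((ContinuousLinearMap.apply ℝ ℝ ((1:ℝ), (0:ℝ))).comp (fderiv ℝ F (u, w))) (u, w) :=
        (ContinuousLinearMap.apply ℝ ℝ ((1:ℝ), (0:ℝ))).hasFDerivAt.comp (u, w) (hdF (u, w))
      exact hcomp.comp_hasDerivAt w (hcurve2 u w)
    have h3 : HasDerivAt (fun t => F (u, t) (1, 0))
        ((U u * exp (h u w) - U₁ u * exp (-(h u w))) * g2 u w) w := by
      have heq : (fun t => F (u, t) (1, 0))
          = fun t => U u * exp (h u t) + U₁ u * exp (-(h u t)) := funext fun t => huval u t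
      rw [heq]
      have hh : HasDerivAt (fun t => h u t) (g2 u w) w := hw_eq u w
      have := ((hh.exp.const_mul (U u)).add ((hh.neg.exp.const_mul (U₁ u))))
      refine this.congr_deriv ?_
      simp only [Pi.neg_apply, Pi.pow_apply]
      ring
    have h4 : fderiv ℝ F (u, w) (0, 1) (1, 0)
        = (U u * exp (h u w) - U₁ u * exp (-(h u w))) * g2 u w := by
      rw [← h2.deriv, ← h3.deriv]
    rw [← hsymm] at h4
    rwa [h4] at h1
  -- one-variable derivatives of coefficient functions
  have hUd : ∀ u, HasDerivAt U (deriv U u) u :=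
    fun u => (hUsm.differentiable (by simp) u).hasDerivAt
  have hU1d : ∀ u, HasDerivAt U₁ (deriv U₁ u) u :=
    fun u => (hU1sm.differentiable (by simp) u).hasDerivAt
  have hU2d : ∀ u, HasDerivAt U₂ (deriv U₂ u) u :=
    fun u => (hU2sm.differentiable (by simp) u).hasDerivAt
  have hUdd : ∀ u, HasDerivAt (deriv U) (deriv (deriv U) u) u := by
    intro u
    have : ContDiff ℝ (⊤ : ℕ∞) (deriv U) :=
      (contDiff_infty_iff_deriv.mp (hUsm.of_le (by simp))).2
    exact (this.differentiable (by simp) u).hasDerivAt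
  have hU1dd : ∀ u, HasDerivAt (deriv U₁) (deriv (deriv U₁) u) u := by
    intro u
    have : ContDiff ℝ (⊤ : ℕ∞) (deriv U₁) :=
      (contDiff_infty_iff_deriv.mp (hU1sm.of_le (by simp))).2
    exact (this.differentiable (by simp) u).hasDerivAt
  -- main identity
  set A : ℝ → ℝ := fun u => 2 * (U₁ u * U₂ u - 2 * U u * (U₁ u) ^ 2 - deriv (deriv U₁) u) with hA
  set B : ℝ → ℝ := fun u =>
    deriv U₂ u + 6 * (deriv U u * U₁ u + U u * deriv U₁ u) with hB
  set C : ℝ → ℝ := fun u =>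
    2 * (deriv (deriv U) u - U u * U₂ u + 2 * (U u) ^ 2 * U₁ u) with hC
  have main : ∀ u w, A u * exp (-(h u w)) + B u + C u * exp (h u w) = 0 := by
    intro u w
    -- Φ t = (g2 t w)^2, Ψ t = RHS of hU2
    set P : ℝ := U u * exp (h u w) + U₁ u * exp (-(h u w)) with hP
    have hh : HasDerivAt (fun t => h t w) P u := by
      have := hu_eq u w; rwa [huval u w] at this
    have hΦ : HasDerivAt (fun t => (g2 t w) ^ 2)
        (2 * g2 u w * ((U u * exp (h u w) - U₁ u * exp (-(h u w))) * g2 u w)) u := by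
      have := (hg2u u w).pow 2
      refine this.congr_deriv ?_
      ring
    have hΨ : HasDerivAt (fun t => -(U₁ t) ^ 2 * exp (-(2 * h t w)) + 2 * deriv U₁ t * exp (-(h t w))
          - U₂ t - 2 * deriv U t * exp (h t w) - (U t) ^ 2 * exp (2 * h t w))
        (-(2 * U₁ u * deriv U₁ u) * exp (-(2 * h u w)) + (U₁ u) ^ 2 * (2 * P) * exp (-(2 * h u w))
          + 2 * deriv (deriv U₁) u * exp (-(h u w)) - 2 * deriv U₁ u * P * exp (-(h u w))
          - deriv U₂ u
          - 2 * deriv (deriv U) u * exp (h u w) - 2 * deriv U u * P * exp (h u w)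
          - 2 * U u * deriv U u * exp (2 * h u w) - (U u) ^ 2 * (2 * P) * exp (2 * h u w)) u := by
      have e1 : HasDerivAt (fun t => exp (-(2 * h t w))) (exp (-(2 * h u w)) * (-(2 * P))) u :=
        ((hh.const_mul 2).neg).exp
      have e2 : HasDerivAt (fun t => exp (-(h t w))) (exp (-(h u w)) * (-P)) u := hh.neg.exp
      have e3 : HasDerivAt (fun t => exp (h t w)) (exp (h u w) * P) u := hh.exp
      have e4 : HasDerivAt (fun t => exp (2 * h t w)) (exp (2 * h u w) * (2 * P)) u :=
        (hh.const_mul 2).exp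
      have t1 := ((hU1d u).pow 2).neg.mul e1
      have t2 := ((hU1dd u).const_mul 2).mul e2
      have t3 := ((hUdd u).const_mul 2).mul e3
      have t4 := ((hUd u).pow 2).mul e4
      have := ((((t1.add t2).sub (hU2d u)).sub t3).sub t4)
      refine this.congr_deriv ?_
      simp only [Pi.neg_apply, Pi.pow_apply]
      ring
    have hfuneq : (fun t => (g2 t w) ^ 2)
        = fun t => -(U₁ t) ^ 2 * exp (-(2 * h t w)) + 2 * deriv U₁ t * exp (-(h t w))
          - U₂ t - 2 * deriv U t * exp (h t w) - (U t) ^ 2 * exp (2 * h t w) := by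
      funext t
      rw [show g2 t w = deriv (fun s => h t s) w from (hw_eq t w).deriv.symm]
      exact hU2 t w
    rw [hfuneq] at hΦ
    have key := hΦ.unique hΨ
    -- replace g2² by the hU2 expression
    have hg2sq : (g2 u w) ^ 2 = -(U₁ u) ^ 2 * exp (-(2 * h u w)) + 2 * deriv U₁ u * exp (-(h u w))
        - U₂ u - 2 * deriv U u * exp (h u w) - (U u) ^ 2 * exp (2 * h u w) := by
      rw [show g2 u w = deriv (fun s => h u s) w from (hw_eq u w).deriv.symm]
      exact hU2 u w
    set E : ℝ := exp (h u w) with hE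
    have hEpos : 0 < E := exp_pos _
    have hne : E ≠ 0 := ne_of_gt hEpos
    have em : exp (-(h u w)) = E⁻¹ := by rw [exp_neg]
    have e2' : exp (2 * h u w) = E ^ 2 := by rw [two_mul, exp_add]; ring
    have em2 : exp (-(2 * h u w)) = (E ^ 2)⁻¹ := by rw [exp_neg, e2']
    rw [hP] at key
    rw [em, e2', em2] at key hg2sq
    have lhs2 : 2 * g2 u w * ((U u * E - U₁ u * E⁻¹) * g2 u w)
        = 2 * (U u * E - U₁ u * E⁻¹) * (g2 u w ^ 2) := by ring
    rw [lhs2, hg2sq] at key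
    rw [em, hA, hB, hC]
    field_simp at key ⊢
    have step : (2 * (U₁ u * U₂ u - 2 * U u * U₁ u ^ 2 - deriv (deriv U₁) u) +
        (deriv U₂ u + 6 * (deriv U u * U₁ u + U u * deriv U₁ u)) * E +
        2 * (deriv (deriv U) u - U u * U₂ u + 2 * U u ^ 2 * U₁ u) * E * E) * E ^ 12 = 0 := by
      linear_combination E ^ 10 * key
    have hEN : E ^ 12 ≠ 0 := pow_ne_zero _ hne
    have h0 := (mul_eq_zero.mp step).resolve_right hEN
    linarith [h0]
  -- extract coefficient equations
  have hcoef : ∀ u, A u = 0 ∧ B u = 0 ∧ C u = 0 :=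
    fun u => hindep u (A u) (B u) (C u) (main u)
  have c1 : ∀ u, deriv (deriv U) u = (U₂ u - 2 * U u * U₁ u) * U u := by
    intro u
    have := (hcoef u).2.2
    simp only [hC] at this
    linear_combination this / 2
  have c2 : ∀ u, deriv (deriv U₁) u = (U₂ u - 2 * U u * U₁ u) * U₁ u := by
    intro u
    have := (hcoef u).1
    simp only [hA] at this
    linear_combination (-1/2 : ℝ) * this
  have c3 : ∀ u, deriv (fun t => U₂ t + 6 * U t * U₁ t) u = 0 := by
    intro u
    have hder : HasDerivAt (fun t => U₂ t + 6 * U t * U₁ t)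
        (deriv U₂ u + 6 * (deriv U u * U₁ u + U u * deriv U₁ u)) u := by
      have := (hU2d u).add (((hUd u).const_mul 6).mul (hU1d u))
      refine this.congr_deriv ?_
      ring
    rw [hder.deriv]
    have := (hcoef u).2.1
    simp only [hB] at this
    linarith
  refine ⟨c1, c2, c3, U₂ 0 + 6 * U 0 * U₁ 0, ?_, ?_, ?_⟩
  · intro u
    have hdiff : Differentiable ℝ (fun t => U₂ t + 6 * U t * U₁ t) :=
      (hU2sm.differentiable (by simp)).add
        (((hUsm.differentiable (by simp)).const_mul 6).mul (hU1sm.differentiable (by simp)))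
    exact is_const_of_deriv_eq_zero hdiff c3 u 0
  · intro u
    have h0 : U₂ u + 6 * U u * U₁ u = U₂ 0 + 6 * U 0 * U₁ 0 := by
      have hdiff : Differentiable ℝ (fun t => U₂ t + 6 * U t * U₁ t) :=
        (hU2sm.differentiable (by simp)).add
          (((hUsm.differentiable (by simp)).const_mul 6).mul (hU1sm.differentiable (by simp)))
      exact is_const_of_deriv_eq_zero hdiff c3 u 0
    rw [c1 u]; linear_combination (U u) * h0
  · intro u
    have h0 : U₂ u + 6 * U u * U₁ u = U₂ 0 + 6 * U 0 * U₁ 0 := by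
      have hdiff : Differentiable ℝ (fun t => U₂ t + 6 * U t * U₁ t) :=
        (hU2sm.differentiable (by simp)).add
          (((hUsm.differentiable (by simp)).const_mul 6).mul (hU1sm.differentiable (by simp)))
      exact is_const_of_deriv_eq_zero hdiff c3 u 0
    rw [c2 u]; linear_combination (U₁ u) * h0
end

section
/- Let f : D → ℝ³ be a curvature-line parametrized surface whose u-curves are planar with plane unit normals m(v) (depending only on v and spanning ℝ³ as v varies) and whose v-curves are spherical with centers Z(u) and with the decomposition Z(u) - f(u,v) = α(u)n(u,v) + β(u)f_u(u,v)/|f_u(u,v)| for functions α, β of u only, where n is the unit normal of f. Assume ⟨n(u,v), m(v)⟩ = cos δ(v) and ⟨f(u,v), m(v)⟩ = c(v) depend only on v, and that α is nonconstant. Then there exist constant vectors A, B ∈ ℝ³ with Z(u) = α(u)A + B for all u (so the sphere centers are collinear), and every plane of the family passes through B, i.e. ⟨f(u,v) - B, m(v)⟩ = 0 for all u, v. -/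
open RealInnerProductSpace

/-- For a curvature-line parametrized surface with planar `u`-curves (plane normals
`m(v)` spanning `ℝ³`) and spherical `v`-curves with nonconstant `α`, the sphere centers
are collinear, `Z(u) = α(u)A + B`, and all curvature-line planes pass through `B`. -/
theorem stmt13
    (f n fu : ℝ → ℝ → EuclideanSpace ℝ (Fin 3))
    (m : ℝ → EuclideanSpace ℝ (Fin 3))
    (Z : ℝ → EuclideanSpace ℝ (Fin 3))
    (α β : ℝ → ℝ) (c δ : ℝ → ℝ)
    (hsmZ : ContDiff ℝ (⊤ : ℕ∞) Z) (hsmα : ContDiff ℝ (⊤ : ℕ∞) α) (hsmβ : ContDiff ℝ (⊤ : ℕ∞) β)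
    (hfu : ∀ u v, HasDerivAt (fun t => f t v) (fu u v) u)
    (hfune : ∀ u v, fu u v ≠ 0)
    (hnunit : ∀ u v, ‖n u v‖ = 1)
    (hspan : ∀ X : EuclideanSpace ℝ (Fin 3), (∀ v, ⟪X, m v⟫ = 0) → X = 0)
    (hfum : ∀ u v, ⟪fu u v, m v⟫ = 0)
    (hnm : ∀ u v, ⟪n u v, m v⟫ = Real.cos (δ v))
    (hfm : ∀ u v, ⟪f u v, m v⟫ = c v)
    (hZ : ∀ u v, Z u - f u v = α u • n u v + β u • (‖fu u v‖⁻¹ • fu u v))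
    (hαnc : ∃ u₁ u₂, α u₁ ≠ α u₂) :
    ∃ A B : EuclideanSpace ℝ (Fin 3),
      (∀ u, Z u = α u • A + B) ∧ (∀ u v, ⟪f u v - B, m v⟫ = 0) := by
  obtain ⟨u₁, u₂, hne⟩ := hαnc
  have hZm : ∀ u v, ⟪Z u, m v⟫ = α u * Real.cos (δ v) + c v := by
    intro u v
    have h1 : ⟪Z u - f u v, m v⟫ = α u * Real.cos (δ v) := by
      rw [hZ u v, inner_add_left, real_inner_smul_left, real_inner_smul_left,
        real_inner_smul_left, hnm, hfum]
      ring
    have h2 : ⟪Z u, m v⟫ - ⟪f u v, m v⟫ = α u * Real.cos (δ v) := by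
      rw [← inner_sub_left]; exact h1
    rw [hfm] at h2; linarith
  set d := α u₁ - α u₂ with hd
  have hdne : d ≠ 0 := sub_ne_zero.mpr hne
  set A : EuclideanSpace ℝ (Fin 3) := d⁻¹ • (Z u₁ - Z u₂) with hA
  set B : EuclideanSpace ℝ (Fin 3) := Z u₁ - α u₁ • A with hB
  have hAm : ∀ v, ⟪A, m v⟫ = Real.cos (δ v) := by
    intro v
    rw [hA, real_inner_smul_left, inner_sub_left, hZm, hZm]
    field_simp
    rw [hd]; ring
  have hBm : ∀ v, ⟪B, m v⟫ = c v := by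
    intro v
    rw [hB, inner_sub_left, real_inner_smul_left, hAm, hZm]
    ring
  refine ⟨A, B, ?_, ?_⟩
  · intro u
    have h0 : ∀ v, ⟪Z u - (α u • A + B), m v⟫ = 0 := by
      intro v
      rw [inner_sub_left, inner_add_left, real_inner_smul_left, hAm, hBm, hZm]
      ring
    have := hspan _ h0
    rw [sub_eq_zero] at this
    exact this
  · intro u v
    rw [inner_sub_left, hBm, hfm]
    ring
end

section
/- Let σ : ℝ² → ℝ (variables u, w) satisfy the harmonic equation σ_{uu} + σ_{ww} = 0 and the Riccati equation σ_w = W(w)e^{iσ} + W₁(w)e^{-iσ}, where W, W₁ are smooth complex-valued functions of w only with W₁ = conj(W). Then σ satisfies σ_{uu} + i e^{2iσ}W² + e^{iσ}W' + e^{-iσ}W₁' - i e^{-2iσ}W₁² = 0, and there exists a real-valued function W₂(w) such that σ_u² + e^{2iσ}W² - 2i e^{iσ}W' + W₂ + 2i e^{-iσ}W₁' + e^{-2iσ}W₁² = 0. -/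
/-- If `σ(u,w)` is harmonic and satisfies the Riccati equation
`σ_w = W e^{iσ} + W₁ e^{-iσ}` with `W₁ = conj W` functions of `w` only, then `σ`
satisfies the stated second-order identity, and there is a real-valued function
`W₂(w)` giving a first integral in `u`. -/
theorem stmt14 (σ : ℝ → ℝ → ℝ) (W W₁ : ℝ → ℂ)
    (hsm : ContDiff ℝ (⊤ : ℕ∞) (Function.uncurry σ))
    (hWsm : ContDiff ℝ (⊤ : ℕ∞) W) (hW1sm : ContDiff ℝ (⊤ : ℕ∞) W₁)
    (hconj : ∀ w, W₁ w = (starRingEnd ℂ) (W w))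
    (hHarm : ∀ u w, deriv (deriv (fun t => σ t w)) u + deriv (deriv (fun t => σ u t)) w = 0)
    (hRic : ∀ u w, ((deriv (fun t => σ u t) w : ℝ) : ℂ) =
      W w * Complex.exp (Complex.I * σ u w) + W₁ w * Complex.exp (-(Complex.I * σ u w))) :
    (∀ u w, ((deriv (deriv (fun t => σ t w)) u : ℝ) : ℂ)
        + Complex.I * Complex.exp (2 * Complex.I * σ u w) * (W w) ^ 2
        + Complex.exp (Complex.I * σ u w) * deriv W w
        + Complex.exp (-(Complex.I * σ u w)) * deriv W₁ w
        - Complex.I * Complex.exp (-(2 * Complex.I * σ u w)) * (W₁ w) ^ 2 = 0) ∧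
    ∃ W₂ : ℝ → ℝ, ∀ u w,
      (((deriv (fun t => σ t w) u) ^ 2 : ℝ) : ℂ)
        + Complex.exp (2 * Complex.I * σ u w) * (W w) ^ 2
        - 2 * Complex.I * Complex.exp (Complex.I * σ u w) * deriv W w
        + (W₂ w : ℂ)
        + 2 * Complex.I * Complex.exp (-(Complex.I * σ u w)) * deriv W₁ w
        + Complex.exp (-(2 * Complex.I * σ u w)) * (W₁ w) ^ 2 = 0 := by
  have hWd : ∀ x, HasDerivAt W (deriv W x) x :=
    fun x => ((hWsm.differentiable (by simp)).differentiableAt).hasDerivAt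
  have hW1d : ∀ x, HasDerivAt W₁ (deriv W₁ x) x :=
    fun x => ((hW1sm.differentiable (by simp)).differentiableAt).hasDerivAt
  have hW1deq : ∀ x, deriv W₁ x = (starRingEnd ℂ) (deriv W x) := by
    intro x
    have h1 : HasDerivAt (⇑Complex.conjCLE ∘ W) (Complex.conjCLE (deriv W x)) x :=
      (Complex.conjCLE.toContinuousLinearMap.hasFDerivAt).comp_hasDerivAt x (hWd x)
    have h2 : (⇑Complex.conjCLE ∘ W) = W₁ := by
      funext y; simp [Function.comp, hconj y]
    rw [h2] at h1
    simpa using h1.deriv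
  have hσu : ∀ u, ContDiff ℝ (⊤ : ℕ∞) (fun t => σ u t) :=
    fun u => hsm.comp (contDiff_const.prodMk contDiff_id)
  have hσw : ∀ w, ContDiff ℝ (⊤ : ℕ∞) (fun t => σ t w) :=
    fun w => hsm.comp (contDiff_id.prodMk contDiff_const)
  have hd1 : ∀ u w, HasDerivAt (fun t => σ u t) (deriv (fun t => σ u t) w) w :=
    fun u w => (((hσu u).differentiable (by simp)).differentiableAt).hasDerivAt
  have hd2 : ∀ u w, HasDerivAt (deriv (fun t => σ u t)) (deriv (deriv (fun t => σ u t)) w) w := by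
    intro u w
    have h := (contDiff_infty_iff_deriv.mp ((hσu u).of_le (by simp))).2
    exact (h.differentiable (by simp)).differentiableAt.hasDerivAt
  have he1 : ∀ u w, HasDerivAt (fun t => σ t w) (deriv (fun t => σ t w) u) u :=
    fun u w => (((hσw w).differentiable (by simp)).differentiableAt).hasDerivAt
  have he2 : ∀ u w, HasDerivAt (deriv (fun t => σ t w)) (deriv (deriv (fun t => σ t w)) u) u := by
    intro u w
    have h := (contDiff_infty_iff_deriv.mp ((hσw w).of_le (by simp))).2
    exact (h.differentiable (by simp)).differentiableAt.hasDerivAt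
  -- σ_ww from the Riccati equation
  have hσww : ∀ u w, ((deriv (deriv (fun t => σ u t)) w : ℝ) : ℂ) =
      deriv W w * Complex.exp (Complex.I * σ u w)
      + W w * (Complex.exp (Complex.I * σ u w) * (Complex.I * ((deriv (fun t => σ u t) w : ℝ) : ℂ)))
      + (deriv W₁ w * Complex.exp (-(Complex.I * σ u w))
      + W₁ w * (Complex.exp (-(Complex.I * σ u w)) * (-(Complex.I * ((deriv (fun t => σ u t) w : ℝ) : ℂ))))) := by
    intro u w
    have hσc : HasDerivAt (fun x => ((σ u x : ℝ) : ℂ)) ((deriv (fun t => σ u t) w : ℝ) : ℂ) w :=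
      (hd1 u w).ofReal_comp
    have hE : HasDerivAt (fun x => Complex.exp (Complex.I * σ u x))
        (Complex.exp (Complex.I * σ u w) * (Complex.I * ((deriv (fun t => σ u t) w : ℝ) : ℂ))) w :=
      (hσc.const_mul Complex.I).cexp
    have hEn : HasDerivAt (fun x => Complex.exp (-(Complex.I * σ u x)))
        (Complex.exp (-(Complex.I * σ u w)) * (-(Complex.I * ((deriv (fun t => σ u t) w : ℝ) : ℂ)))) w :=
      ((hσc.const_mul Complex.I).neg).cexp
    have hg := ((hWd w).mul hE).add ((hW1d w).mul hEn)
    have hf : HasDerivAt (fun x => ((deriv (fun t => σ u t) x : ℝ) : ℂ))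
        ((deriv (deriv (fun t => σ u t)) w : ℝ) : ℂ) w := (hd2 u w).ofReal_comp
    have heq : (fun x => ((deriv (fun t => σ u t) x : ℝ) : ℂ)) =
        (fun x => W x * Complex.exp (Complex.I * σ u x) + W₁ x * Complex.exp (-(Complex.I * σ u x))) :=
      funext (fun x => hRic u x)
    rw [heq] at hf
    exact hf.unique hg
  have hexp2 : ∀ u w : ℝ, Complex.exp (2 * Complex.I * σ u w)
      = Complex.exp (Complex.I * σ u w) ^ 2 := by
    intro u w
    rw [show (2 : ℂ) * Complex.I * σ u w = (2 : ℕ) * (Complex.I * σ u w) by push_cast; ring,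
      Complex.exp_nat_mul]
  have hexp2n : ∀ u w : ℝ, Complex.exp (-(2 * Complex.I * σ u w))
      = Complex.exp (-(Complex.I * σ u w)) ^ 2 := by
    intro u w
    rw [show -((2 : ℂ) * Complex.I * σ u w) = (2 : ℕ) * (-(Complex.I * σ u w)) by push_cast; ring,
      Complex.exp_nat_mul]
  have part1 : ∀ u w, ((deriv (deriv (fun t => σ t w)) u : ℝ) : ℂ)
      + Complex.I * Complex.exp (2 * Complex.I * σ u w) * (W w) ^ 2
      + Complex.exp (Complex.I * σ u w) * deriv W w
      + Complex.exp (-(Complex.I * σ u w)) * deriv W₁ w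
      - Complex.I * Complex.exp (-(2 * Complex.I * σ u w)) * (W₁ w) ^ 2 = 0 := by
    intro u w
    have hh : ((deriv (deriv (fun t => σ t w)) u : ℝ) : ℂ)
        = -((deriv (deriv (fun t => σ u t)) w : ℝ) : ℂ) := by
      have h : (deriv (deriv (fun t => σ t w)) u : ℝ) = -(deriv (deriv (fun t => σ u t)) w) := by
        linarith [hHarm u w]
      exact_mod_cast congrArg (Complex.ofReal) h
    rw [hh, hσww u w, hexp2 u w, hexp2n u w]
    have hr := hRic u w
    linear_combination (Complex.I * (W₁ w * Complex.exp (-(Complex.I * σ u w))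
      - W w * Complex.exp (Complex.I * σ u w))) * hr
  refine ⟨part1, ?_⟩
  refine ⟨fun w => -(((deriv (fun t => σ t w) 0 : ℝ) : ℂ) ^ 2
      + Complex.exp (2 * Complex.I * σ 0 w) * (W w) ^ 2
      - 2 * Complex.I * Complex.exp (Complex.I * σ 0 w) * deriv W w
      + 2 * Complex.I * Complex.exp (-(Complex.I * σ 0 w)) * deriv W₁ w
      + Complex.exp (-(2 * Complex.I * σ 0 w)) * (W₁ w) ^ 2).re, ?_⟩
  intro u w
  set G : ℝ → ℂ := fun v => ((deriv (fun t => σ t w) v : ℝ) : ℂ) ^ 2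
      + Complex.exp (2 * Complex.I * σ v w) * (W w) ^ 2
      - 2 * Complex.I * Complex.exp (Complex.I * σ v w) * deriv W w
      + 2 * Complex.I * Complex.exp (-(Complex.I * σ v w)) * deriv W₁ w
      + Complex.exp (-(2 * Complex.I * σ v w)) * (W₁ w) ^ 2 with hG
  have hG0 : ∀ v, HasDerivAt G 0 v := by
    intro v
    have hσc : HasDerivAt (fun t => ((σ t w : ℝ) : ℂ)) ((deriv (fun t => σ t w) v : ℝ) : ℂ) v :=
      (he1 v w).ofReal_comp
    have hA : HasDerivAt (fun t => ((deriv (fun t => σ t w) t : ℝ) : ℂ))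
        ((deriv (deriv (fun t => σ t w)) v : ℝ) : ℂ) v := (he2 v w).ofReal_comp
    have h1 : HasDerivAt (fun t => ((deriv (fun t => σ t w) t : ℝ) : ℂ) ^ 2)
        (((deriv (deriv (fun t => σ t w)) v : ℝ) : ℂ) * ((deriv (fun t => σ t w) v : ℝ) : ℂ)
          + ((deriv (fun t => σ t w) v : ℝ) : ℂ) * ((deriv (deriv (fun t => σ t w)) v : ℝ) : ℂ)) v := by
      simpa only [pow_two, Pi.mul_def] using hA.mul hA
    have h2 := ((hσc.const_mul (2 * Complex.I)).cexp).mul_const ((W w) ^ 2)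
    have h3 := (((hσc.const_mul Complex.I).cexp).const_mul (2 * Complex.I)).mul_const (deriv W w)
    have h4 := (((hσc.const_mul Complex.I).neg.cexp).const_mul (2 * Complex.I)).mul_const (deriv W₁ w)
    have h5 := ((hσc.const_mul (2 * Complex.I)).neg.cexp).mul_const ((W₁ w) ^ 2)
    have hG' := (((h1.add h2).sub h3).add h4).add h5
    have hD : ((((deriv (deriv (fun t => σ t w)) v : ℝ) : ℂ) * ((deriv (fun t => σ t w) v : ℝ) : ℂ)
          + ((deriv (fun t => σ t w) v : ℝ) : ℂ) * ((deriv (deriv (fun t => σ t w)) v : ℝ) : ℂ))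
        + Complex.exp (2 * Complex.I * σ v w)
          * (2 * Complex.I * ((deriv (fun t => σ t w) v : ℝ) : ℂ)) * (W w) ^ 2
        - 2 * Complex.I * (Complex.exp (Complex.I * σ v w)
          * (Complex.I * ((deriv (fun t => σ t w) v : ℝ) : ℂ))) * deriv W w
        + 2 * Complex.I * (Complex.exp (-(Complex.I * σ v w))
          * (-(Complex.I * ((deriv (fun t => σ t w) v : ℝ) : ℂ)))) * deriv W₁ w
        + Complex.exp (-(2 * Complex.I * σ v w))
          * (-(2 * Complex.I * ((deriv (fun t => σ t w) v : ℝ) : ℂ))) * (W₁ w) ^ 2) = 0 := by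
      have hp := part1 v w
      linear_combination (2 * ((deriv (fun t => σ t w) v : ℝ) : ℂ)) * hp
        + (-(2 * ((deriv (fun t => σ t w) v : ℝ) : ℂ))
          * (Complex.exp (Complex.I * σ v w) * deriv W w
            + Complex.exp (-(Complex.I * σ v w)) * deriv W₁ w)) * Complex.I_mul_I
    simp only [Pi.neg_apply] at hG'
    rw [hD] at hG'
    exact hG'
  have hGu : G u = G 0 := by
    apply is_const_of_fderiv_eq_zero (fun y => (hG0 y).differentiableAt)
    intro y
    rw [(hG0 y).hasFDerivAt.fderiv]; ext; simp
  have c1 : (starRingEnd ℂ) (W w) = W₁ w := (hconj w).symm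
  have c2 : (starRingEnd ℂ) (W₁ w) = W w := by rw [hconj w]; simp
  have c3 : (starRingEnd ℂ) (deriv W w) = deriv W₁ w := (hW1deq w).symm
  have c4 : (starRingEnd ℂ) (deriv W₁ w) = deriv W w := by rw [hW1deq w]; simp
  have e1 : (starRingEnd ℂ) (Complex.exp (2 * Complex.I * σ 0 w))
      = Complex.exp (-(2 * Complex.I * σ 0 w)) := by
    rw [← Complex.exp_conj]; congr 1
    simp only [map_mul, map_ofNat, Complex.conj_I, Complex.conj_ofReal]; ring
  have e2 : (starRingEnd ℂ) (Complex.exp (Complex.I * σ 0 w))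
      = Complex.exp (-(Complex.I * σ 0 w)) := by
    rw [← Complex.exp_conj]; congr 1
    simp only [map_mul, Complex.conj_I, Complex.conj_ofReal]; ring
  have e3 : (starRingEnd ℂ) (Complex.exp (-(Complex.I * σ 0 w)))
      = Complex.exp (Complex.I * σ 0 w) := by
    rw [← Complex.exp_conj]; congr 1
    simp only [map_neg, map_mul, Complex.conj_I, Complex.conj_ofReal]; ring
  have e4 : (starRingEnd ℂ) (Complex.exp (-(2 * Complex.I * σ 0 w)))
      = Complex.exp (2 * Complex.I * σ 0 w) := by
    rw [← Complex.exp_conj]; congr 1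
    simp only [map_neg, map_mul, map_ofNat, Complex.conj_I, Complex.conj_ofReal]; ring
  have hre : ((G 0).re : ℂ) = G 0 := by
    rw [← Complex.conj_eq_iff_re]
    simp only [hG, map_add, map_sub, map_mul, map_pow, map_ofNat, Complex.conj_I,
      Complex.conj_ofReal, c1, c2, c3, c4, e1, e2, e3, e4]
    ring
  simp only [hG] at hGu hre
  beta_reduce
  push_cast
  linear_combination hGu - hre
end

section
/- Let f be an isothermic immersion with frame satisfying f_v = n × f_u (curvature-line conformal parametrization) and suppose the v-curve through each u₀ lies on a sphere: Z(u) - f(u,v) = α(u)n(u,v) + β(u)e^{-h(u,v)}f_u(u,v), where e^{2h} is the conformal factor. Using the structure equations n_v = -k₂ f_v, f_{uv} = h_v f_u + h_u f_v, and setting q = k₂e^h, differentiation in v shows that sphericality of the v-curves is equivalent to the scalar identity e^{h(u,v)} - α(u)q(u,v) + β(u)h_u(u,v) = 0 for all (u,v). -/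
open RealInnerProductSpace

/-! The curve `t ↦ f + α n + β e^{-h} f_u` along a `v`-line has, by the structure equations,
velocity `e^{-h} (e^h - α q + β h_u) f_v`. Since `f_v ≠ 0`, this curve is constant (its value
being the centre `Z(u)`) exactly when the scalar factor vanishes identically. -/

lemma differentiableAt_of_inner_self_eq_exp {E : Type*} [NormedAddCommGroup E]
    [InnerProductSpace ℝ E] {F : ℝ → E} {g : ℝ → ℝ} {v : ℝ} (hF : DifferentiableAt ℝ F v)
    (hg : ∀ t, ⟪F t, F t⟫ = Real.exp (2 * g t)) : DifferentiableAt ℝ g v := by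
  have hlog : g = fun t => Real.log ⟪F t, F t⟫ / 2 := by
    funext t
    rw [hg, Real.log_exp]
    ring
  rw [hlog]
  refine ((hF.inner ℝ hF).log ?_).div_const 2
  rw [hg]
  exact (Real.exp_pos _).ne'

lemma exists_forall_eq_iff_of_hasDerivAt_smul {E : Type*} [NormedAddCommGroup E]
    [NormedSpace ℝ E] {c w : ℝ → E} {a : ℝ → ℝ} (hw : ∀ t, w t ≠ 0)
    (hc : ∀ t, HasDerivAt c (a t • w t) t) : (∃ z, ∀ t, c t = z) ↔ ∀ t, a t = 0 := by
  constructor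
  · rintro ⟨z, hz⟩ t
    have hconst : c = fun _ => z := funext hz
    have hzero : a t • w t = 0 := (hc t).unique (hconst ▸ hasDerivAt_const t z)
    exact (smul_eq_zero.mp hzero).resolve_right (hw t)
  · intro ha
    have hderiv : ∀ t, HasDerivAt c 0 t := fun t => by simpa [ha t] using hc t
    exact ⟨c 0, fun t => is_const_of_deriv_eq_zero (fun s => (hderiv s).differentiableAt)
      (fun s => (hderiv s).deriv) t 0⟩

lemma hasDerivAt_add_smul_normal_add_smul_tangent {E : Type*} [NormedAddCommGroup E]
    [NormedSpace ℝ E] {f n fu fv : ℝ → E} {h k p : ℝ → ℝ} {h' v : ℝ} (α β : ℝ)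
    (hf : HasDerivAt f (fv v) v) (hn : HasDerivAt n (-(k v) • fv v) v)
    (hfu : HasDerivAt fu (h' • fu v + p v • fv v) v) (hh : HasDerivAt h h' v) :
    HasDerivAt (fun t => f t + α • n t + β • (Real.exp (-h t) • fu t))
      ((Real.exp (-h v) * (Real.exp (h v) - α * (k v * Real.exp (h v)) + β * p v)) • fv v) v := by
  have hexp : Real.exp (-h v) * Real.exp (h v) = 1 := by
    rw [← Real.exp_add, neg_add_cancel, Real.exp_zero]
  refine ((hf.add (hn.const_smul α)).add ((hh.neg.exp.smul hfu).const_smul β)).congr_deriv ?_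
  linear_combination (norm := module) (α * k v - 1) • hexp • fv v

theorem stmt17_general
    (f fu fv n : ℝ → ℝ → EuclideanSpace ℝ (Fin 3))
    (h k₂ : ℝ → ℝ → ℝ)
    (hfv : ∀ u v, HasDerivAt (fun t => f u t) (fv u v) v)
    (hconf1 : ∀ u v, ⟪fu u v, fu u v⟫ = Real.exp (2 * h u v))
    (hfvne : ∀ u v, fv u v ≠ 0)
    (hfuv : ∀ u v, HasDerivAt (fun t => fu u t)
      ((deriv (fun t => h u t) v) • fu u v + (deriv (fun t => h t v) u) • fv u v) v)
    (hnv : ∀ u v, HasDerivAt (fun t => n u t) (-(k₂ u v) • fv u v) v) :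
    (∃ Z : ℝ → EuclideanSpace ℝ (Fin 3), ∃ α β : ℝ → ℝ,
        Differentiable ℝ α ∧ Differentiable ℝ β ∧
        ∀ u v, Z u - f u v = α u • n u v + β u • (Real.exp (-(h u v)) • fu u v)) ↔
    (∃ α β : ℝ → ℝ, Differentiable ℝ α ∧ Differentiable ℝ β ∧
        ∀ u v, Real.exp (h u v) - α u * (k₂ u v * Real.exp (h u v))
          + β u * deriv (fun t => h t v) u = 0) := by
  have hcentre : ∀ (α β : ℝ → ℝ) u,
      (∃ z, ∀ v, f u v + α u • n u v + β u • (Real.exp (-h u v) • fu u v) = z) ↔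
        ∀ v, Real.exp (h u v) - α u * (k₂ u v * Real.exp (h u v))
          + β u * deriv (fun t => h t v) u = 0 := fun α β u => by
    have hh : ∀ v, HasDerivAt (fun t => h u t) (deriv (fun t => h u t) v) v := fun v =>
      (differentiableAt_of_inner_self_eq_exp (hfuv u v).differentiableAt (hconf1 u)).hasDerivAt
    refine (exists_forall_eq_iff_of_hasDerivAt_smul (hfvne u) fun v =>
      hasDerivAt_add_smul_normal_add_smul_tangent (p := fun v => deriv (fun t => h t v) u)
        (α u) (β u) (hfv u v) (hnv u v) (hfuv u v) (hh v)).trans (forall_congr' fun v => ?_)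
    simp only [mul_eq_zero, Real.exp_ne_zero, false_or]
  constructor
  · rintro ⟨Z, α, β, hα, hβ, hZ⟩
    refine ⟨α, β, hα, hβ, fun u => (hcentre α β u).1 ⟨Z u, fun v => ?_⟩⟩
    rw [add_assoc, ← hZ u v, add_sub_cancel]
  · rintro ⟨α, β, hα, hβ, hs⟩
    choose Z hZ using fun u => (hcentre α β u).2 (hs u)
    refine ⟨Z, α, β, hα, hβ, fun u v => ?_⟩
    rw [← hZ u v, add_assoc, add_sub_cancel_left]

/-- For an isothermic immersion, the `v`-curves are spherical (admit a center/angle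
decomposition of `Z(u) - f`) if and only if there exist functions `α(u)`, `β(u)` with
`e^h - α q + β h_u = 0`, where `q = k₂ e^h`. -/
theorem stmt17
    (f fu fv n : ℝ → ℝ → EuclideanSpace ℝ (Fin 3))
    (h k₂ : ℝ → ℝ → ℝ)
    (hfu : ∀ u v, HasDerivAt (fun t => f t v) (fu u v) u)
    (hfv : ∀ u v, HasDerivAt (fun t => f u t) (fv u v) v)
    (hconf1 : ∀ u v, ⟪fu u v, fu u v⟫ = Real.exp (2 * h u v))
    (hconf2 : ∀ u v, ⟪fv u v, fv u v⟫ = Real.exp (2 * h u v))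
    (hconf3 : ∀ u v, ⟪fu u v, fv u v⟫ = 0)
    (hfvne : ∀ u v, fv u v ≠ 0)
    (hfuv : ∀ u v, HasDerivAt (fun t => fu u t)
      ((deriv (fun t => h u t) v) • fu u v + (deriv (fun t => h t v) u) • fv u v) v)
    (hnv : ∀ u v, HasDerivAt (fun t => n u t) (-(k₂ u v) • fv u v) v) :
    (∃ Z : ℝ → EuclideanSpace ℝ (Fin 3), ∃ α β : ℝ → ℝ,
        Differentiable ℝ α ∧ Differentiable ℝ β ∧
        ∀ u v, Z u - f u v = α u • n u v + β u • (Real.exp (-(h u v)) • fu u v)) ↔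
    (∃ α β : ℝ → ℝ, Differentiable ℝ α ∧ Differentiable ℝ β ∧
        ∀ u v, Real.exp (h u v) - α u * (k₂ u v * Real.exp (h u v))
          + β u * deriv (fun t => h t v) u = 0) :=
  stmt17_general f fu fv n h k₂ hfv hconf1 hfvne hfuv hnv
end

section
/- Suppose real-valued functions h(u,v), p(u,v), q(u,v) satisfy the Gauss–Codazzi-type system h_{uu} + h_{vv} = -pq, p_v = h_v q, q_u = h_u p, and the planarity condition ∂_u(p_v/(pq)) = 0 (with p, q, h_v nonvanishing). Then there exists a function V(v) of v only such that p = V(v)h_v and q = V'(v) + V(v)h_{vv}/h_v, and h satisfies h_{uu} + (1 + V(v)²)h_{vv} + V(v)V'(v)h_v = 0. Moreover, under the change of variable w(v) with w'(v) = 1/√(1 + V(v)²), the last equation becomes the harmonic equation h_{uu} + h_{ww} = 0. -/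
open Function

lemma deriv2_smooth {F : ℝ → ℝ → ℝ} (hF : ContDiff ℝ (⊤ : ℕ∞) (uncurry F)) :
    ContDiff ℝ (⊤ : ℕ∞) (uncurry fun u v => deriv (fun t => F u t) v) := by
  have key : ∀ u v : ℝ, deriv (fun t => F u t) v
      = fderiv ℝ (uncurry F) (u, v) (0, 1) := by
    intro u v
    have h1 : HasDerivAt (fun t : ℝ => ((u, t) : ℝ × ℝ)) (0, 1) v :=
      (hasDerivAt_const v u).prodMk (hasDerivAt_id v)
    have h2 : HasFDerivAt (uncurry F) (fderiv ℝ (uncurry F) (u, v)) (u, v) :=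
      (hF.differentiable (by simp) (u, v)).hasFDerivAt
    have h3 : HasDerivAt (fun t => F u t) (fderiv ℝ (uncurry F) (u, v) (0, 1)) v :=
      h2.comp_hasDerivAt v h1
    exact h3.deriv
  have heq : (uncurry fun u v => deriv (fun t => F u t) v)
      = fun x : ℝ × ℝ => fderiv ℝ (uncurry F) x ((0 : ℝ), (1 : ℝ)) := by
    ext x; exact key x.1 x.2
  rw [heq]
  exact (hF.fderiv_right (by simp)).clm_apply contDiff_const

/-- For the Gauss–Codazzi system with the planarity condition `∂_u(p_v/(pq)) = 0`,
there is a function `V(v)` with `p = V h_v`, `q = V' + V h_{vv}/h_v`, the metric factor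
satisfies the modified harmonic equation, and under the reparametrization
`w'(v) = 1/√(1+V²)` the equation becomes `h_{uu} + h_{ww} = 0`. -/
theorem stmt18 (h p q : ℝ → ℝ → ℝ)
    (hsm : ContDiff ℝ (⊤ : ℕ∞) (Function.uncurry h))
    (hpsm : ContDiff ℝ (⊤ : ℕ∞) (Function.uncurry p))
    (hqsm : ContDiff ℝ (⊤ : ℕ∞) (Function.uncurry q))
    (hpne : ∀ u v, p u v ≠ 0) (hqne : ∀ u v, q u v ≠ 0)
    (hhvne : ∀ u v, deriv (fun t => h u t) v ≠ 0)
    (hGauss : ∀ u v, deriv (deriv (fun t => h t v)) u + deriv (deriv (fun t => h u t)) v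
        = -(p u v * q u v))
    (hCod1 : ∀ u v, deriv (fun t => p u t) v = deriv (fun t => h u t) v * q u v)
    (hCod2 : ∀ u v, deriv (fun t => q t v) u = deriv (fun t => h t v) u * p u v)
    (hplanar : ∀ u v,
      deriv (fun t => deriv (fun s => p t s) v / (p t v * q t v)) u = 0) :
    ∃ V : ℝ → ℝ, ContDiff ℝ (⊤ : ℕ∞) V ∧
      (∀ u v, p u v = V v * deriv (fun t => h u t) v) ∧
      (∀ u v, q u v = deriv V v
          + V v * (deriv (deriv (fun t => h u t)) v / deriv (fun t => h u t) v)) ∧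
      (∀ u v, deriv (deriv (fun t => h t v)) u
          + (1 + (V v) ^ 2) * deriv (deriv (fun t => h u t)) v
          + V v * deriv V v * deriv (fun t => h u t) v = 0) ∧
      (∀ (w : ℝ → ℝ) (H : ℝ → ℝ → ℝ),
        (∀ v, HasDerivAt w (1 / Real.sqrt (1 + (V v) ^ 2)) v) →
        ContDiff ℝ (⊤ : ℕ∞) (Function.uncurry H) →
        (∀ u v, H u (w v) = h u v) →
        ∀ u v, deriv (deriv (fun t => h t v)) u + deriv (deriv (fun t => H u t)) (w v) = 0) := by
  have hv_sm : ContDiff ℝ (⊤ : ℕ∞) (uncurry fun u v => deriv (fun t => h u t) v) :=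
    deriv2_smooth hsm
  have slice2 : ∀ (F : ℝ → ℝ → ℝ), ContDiff ℝ (⊤ : ℕ∞) (uncurry F) →
      ∀ u, ContDiff ℝ (⊤ : ℕ∞) (fun v => F u v) := fun F hF u =>
    hF.comp (contDiff_const.prodMk contDiff_id)
  have slice1 : ∀ (F : ℝ → ℝ → ℝ), ContDiff ℝ (⊤ : ℕ∞) (uncurry F) →
      ∀ v, ContDiff ℝ (⊤ : ℕ∞) (fun u => F u v) := fun F hF v =>
    hF.comp (contDiff_id.prodMk contDiff_const)
  set V : ℝ → ℝ := fun v => p 0 v / deriv (fun t => h 0 t) v with hVdef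
  have hVsm : ContDiff ℝ (⊤ : ℕ∞) V :=
    (slice2 p hpsm 0).div (slice2 _ hv_sm 0) (fun v => hhvne 0 v)
  have hVd : Differentiable ℝ V := hVsm.differentiable (by simp)
  -- p = V * h_v
  have key1 : ∀ u v, p u v = V v * deriv (fun t => h u t) v := by
    intro u v
    have hgd : Differentiable ℝ (fun t => deriv (fun s => h t s) v / p t v) :=
      ((slice1 _ hv_sm v).differentiable (by simp)).div
        ((slice1 p hpsm v).differentiable (by simp)) (fun t => hpne t v)
    have hg0 : ∀ t, deriv (fun t => deriv (fun s => h t s) v / p t v) t = 0 := by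
      intro t
      have heq : (fun t => deriv (fun s => h t s) v / p t v)
          = fun t => deriv (fun s => p t s) v / (p t v * q t v) := by
        funext t
        rw [hCod1 t v, div_eq_div_iff (hpne t v) (mul_ne_zero (hpne t v) (hqne t v))]
        ring
      rw [heq]
      exact hplanar t v
    have hconst := is_const_of_deriv_eq_zero hgd hg0 u 0
    have h1 := hhvne u v; have h2 := hpne u v
    have h3 := hhvne 0 v; have h4 := hpne 0 v
    rw [div_eq_div_iff h2 h4] at hconst
    rw [hVdef]
    field_simp
    linear_combination -hconst
  -- q = V' + V h_vv / h_v
  have key2 : ∀ u v, q u v = deriv V v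
      + V v * (deriv (deriv (fun t => h u t)) v / deriv (fun t => h u t) v) := by
    intro u v
    have hdv : HasDerivAt (fun t => deriv (fun s => h u s) t)
        (deriv (deriv (fun t => h u t)) v) v :=
      (((slice2 _ hv_sm u).differentiable (by simp)) v).hasDerivAt
    have hpv : HasDerivAt (fun t => p u t)
        (deriv V v * deriv (fun t => h u t) v
          + V v * deriv (deriv (fun t => h u t)) v) v := by
      have heq : (fun t => p u t) = fun t => V t * deriv (fun s => h u s) t := by
        funext t; rw [key1 u t]
      rw [heq]
      exact (hVd v).hasDerivAt.mul hdv
    have h1 := hCod1 u v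
    rw [hpv.deriv] at h1
    have h2 := hhvne u v
    field_simp
    linear_combination -h1
  -- modified harmonic equation
  have key3 : ∀ u v, deriv (deriv (fun t => h t v)) u
      + (1 + (V v) ^ 2) * deriv (deriv (fun t => h u t)) v
      + V v * deriv V v * deriv (fun t => h u t) v = 0 := by
    intro u v
    have hG := hGauss u v
    have hpq : p u v * q u v = V v * deriv V v * deriv (fun t => h u t) v
        + V v ^ 2 * deriv (deriv (fun t => h u t)) v := by
      rw [key1 u v, key2 u v]
      have h2 := hhvne u v
      field_simp
    rw [hpq] at hG
    linear_combination hG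
  refine ⟨V, hVsm, key1, key2, key3, ?_⟩
  -- harmonic after reparametrization
  intro w H hw HSm hHh u v
  have Hw_sm : ContDiff ℝ (⊤ : ℕ∞) (uncurry fun u s => deriv (fun x => H u x) s) :=
    deriv2_smooth HSm
  have hsq : ∀ t : ℝ, (0:ℝ) < 1 + V t ^ 2 := fun t => by positivity
  have hsqrt_pos : ∀ t : ℝ, 0 < Real.sqrt (1 + V t ^ 2) :=
    fun t => Real.sqrt_pos.2 (hsq t)
  -- derivative of φ t = 1/√(1+V t²)
  have hφ : ∀ t, HasDerivAt (fun s => 1 / Real.sqrt (1 + V s ^ 2))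
      (-(V t * deriv V t) * (1 / Real.sqrt (1 + V t ^ 2)) ^ 3) t := by
    intro t
    have h1 : HasDerivAt (fun s => 1 + V s ^ 2) (2 * V t * deriv V t) t := by
      have h0 := ((hVd t).hasDerivAt.pow 2).const_add 1
      simpa [mul_comm] using h0
    have h2 : HasDerivAt (fun s => Real.sqrt (1 + V s ^ 2))
        (V t * deriv V t / Real.sqrt (1 + V t ^ 2)) t := by
      have h0 := (Real.hasDerivAt_sqrt (ne_of_gt (hsq t))).comp t h1
      refine h0.congr_deriv (Eq.symm ?_)
      ring
    have h3 := h2.inv (ne_of_gt (hsqrt_pos t))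
    have heq : (fun s => Real.sqrt (1 + V s ^ 2))⁻¹
        = fun s => 1 / Real.sqrt (1 + V s ^ 2) := by
      funext s; rw [Pi.inv_apply, one_div]
    rw [heq] at h3
    refine h3.congr_deriv (Eq.symm ?_)
    have h4 : Real.sqrt (1 + V t ^ 2) ^ 2 = 1 + V t ^ 2 :=
      Real.sq_sqrt (le_of_lt (hsq t))
    have h5 := ne_of_gt (hsqrt_pos t)
    have h6 : Real.sqrt (1 + V t ^ 2) ^ 3 = (1 + V t ^ 2) * Real.sqrt (1 + V t ^ 2) := by
      rw [pow_succ, h4]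
    rw [div_pow, one_pow, h6, h4]
    rw [← neg_div, div_div, mul_one_div, mul_comm (Real.sqrt (1 + V t ^ 2)) (1 + V t ^ 2)]
  -- h_v = H_w ∘ w · w'
  have hv_eq : ∀ t, deriv (fun s => h u s) t
      = deriv (fun x => H u x) (w t) * (1 / Real.sqrt (1 + V t ^ 2)) := by
    intro t
    have h1 : HasDerivAt (fun x => H u x) (deriv (fun x => H u x) (w t)) (w t) :=
      (((slice2 H HSm u).differentiable (by simp)) (w t)).hasDerivAt
    have h2 := h1.comp t (hw t)
    have heq : (fun s => h u s) = fun s => H u (w s) := by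
      funext s; rw [hHh u s]
    rw [heq]
    exact h2.deriv
  -- h_vv
  have hvv_eq : deriv (deriv (fun s => h u s)) v
      = deriv (deriv (fun y => H u y)) (w v) * (1 / Real.sqrt (1 + V v ^ 2))
          * (1 / Real.sqrt (1 + V v ^ 2))
        + deriv (fun x => H u x) (w v)
          * (-(V v * deriv V v) * (1 / Real.sqrt (1 + V v ^ 2)) ^ 3) := by
    have h1 : HasDerivAt (fun x => deriv (fun y => H u y) x)
        (deriv (deriv (fun y => H u y)) (w v)) (w v) :=
      (((slice2 _ Hw_sm u).differentiable (by simp)) (w v)).hasDerivAt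
    have h2 : HasDerivAt
        (fun t => deriv (fun y => H u y) (w t) * (1 / Real.sqrt (1 + V t ^ 2)))
        (deriv (deriv fun y => H u y) (w v) * (1 / Real.sqrt (1 + V v ^ 2))
            * (1 / Real.sqrt (1 + V v ^ 2))
          + deriv (fun x => H u x) (w v)
            * (-(V v * deriv V v) * (1 / Real.sqrt (1 + V v ^ 2)) ^ 3)) v :=
      (h1.comp v (hw v)).mul (hφ v)
    have heq : deriv (fun s => h u s)
        = fun t => deriv (fun y => H u y) (w t) * (1 / Real.sqrt (1 + V t ^ 2)) := by
      funext t; exact hv_eq t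
    rw [heq, h2.deriv]
  have h3 := key3 u v
  rw [hvv_eq, hv_eq v] at h3
  have hphisq : (1 + V v ^ 2) * (1 / Real.sqrt (1 + V v ^ 2)) ^ 2 = 1 := by
    rw [one_div, inv_pow, Real.sq_sqrt (le_of_lt (hsq v))]
    exact mul_inv_cancel₀ (ne_of_gt (hsq v))
  linear_combination h3 + (V v * deriv V v * deriv (fun y => H u y) (w v)
      * (1 / Real.sqrt (1 + V v ^ 2)) - deriv (deriv (fun y => H u y)) (w v)) * hphisq
end
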